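/- arXiv:2307.00299 — 4 statements merged into one kernel-verified Lean document; each statement's English description precedes it below -/
import Mathlib

section
/- Let \(P\) be a finite free \(\mathbb{Z}_2\)-poset (a poset with an order-preserving involution \(\nu\) having no fixed points). Then \(\operatorname{Xind}(P) \leq \operatorname{height}(P) - 1\), where \(\operatorname{height}(P)\) is the maximum size of a chain in \(P\), and \(\operatorname{Xind}(P)\) is the minimum \(t\) such that there is a \(\mathbb{Z}_2\)-map (order-preserving equivariant map) from \(P\) to \(Q_t\). -/
/-- The height of a finite poset: the maximum size of a chain
(a set of pairwise comparable elements). -/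
noncomputable def posetHeight (P : Type) [PartialOrder P] [Fintype P] : ℕ :=
  sSup {n | ∃ s : Finset P, (∀ a ∈ s, ∀ b ∈ s, a ≤ b ∨ b ≤ a) ∧ s.card = n}

/-- The cross-index of a free `ℤ₂`-poset `(P, ν)`: the minimum `t` such that there
is an order-preserving equivariant map to the poset `Q_t`, whose ground set is
`{±1, …, ±(t+1)}` (encoded as nonzero integers of absolute value at most `t+1`),
ordered by `x ⪯ y` iff `x = y` or `|x| < |y|`, with involution `x ↦ -x`. -/
noncomputable def crossIndex (P : Type) [PartialOrder P] (ν : P → P) : ℕ :=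
  sInf {t : ℕ | ∃ f : P → ℤ,
    (∀ p : P, 1 ≤ |f p| ∧ |f p| ≤ (t : ℤ) + 1) ∧
    (∀ p q : P, p ≤ q → (f p = f q ∨ |f p| < |f q|)) ∧
    (∀ p : P, f (ν p) = -(f p))}

/-- The set of cardinalities of chains ending at `x`. -/
def chainSetTo (P : Type) [PartialOrder P] (x : P) : Set ℕ :=
  {n | ∃ s : Finset P, (∀ a ∈ s, ∀ b ∈ s, a ≤ b ∨ b ≤ a) ∧ (∀ a ∈ s, a ≤ x) ∧ s.card = n}

/-- The height of an element: max size of a chain all of whose elements are `≤ x`. -/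
noncomputable def Hgt (P : Type) [PartialOrder P] (x : P) : ℕ := sSup (chainSetTo P x)

section lemmas

variable (P : Type) [PartialOrder P] [Fintype P]

lemma chainSetTo_bdd (x : P) : BddAbove (chainSetTo P x) := by
  refine ⟨Fintype.card P, fun n hn => ?_⟩
  obtain ⟨s, -, -, hcard⟩ := hn
  exact hcard ▸ s.card_le_univ

lemma chainSetTo_ne (x : P) : (chainSetTo P x).Nonempty := by
  refine ⟨1, {x}, ?_, ?_, Finset.card_singleton x⟩
  · intro a ha b hb
    simp only [Finset.mem_singleton] at ha hb
    subst ha; subst hb; exact Or.inl le_rfl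
  · intro a ha; simp only [Finset.mem_singleton] at ha; exact ha.le

lemma Hgt_mem (x : P) : Hgt P x ∈ chainSetTo P x :=
  Nat.sSup_mem (chainSetTo_ne P x) (chainSetTo_bdd P x)

lemma Hgt_pos (x : P) : 1 ≤ Hgt P x := by
  refine le_csSup (chainSetTo_bdd P x) ⟨{x}, ?_, ?_, Finset.card_singleton x⟩
  · intro a ha b hb
    simp only [Finset.mem_singleton] at ha hb
    subst ha; subst hb; exact Or.inl le_rfl
  · intro a ha; simp only [Finset.mem_singleton] at ha; exact ha.le

lemma Hgt_le_posetHeight (x : P) : Hgt P x ≤ posetHeight P := by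
  obtain ⟨s, hchain, -, hcard⟩ := Hgt_mem P x
  refine le_csSup ⟨Fintype.card P, fun n hn => ?_⟩ ⟨s, hchain, hcard⟩
  obtain ⟨s, -, hcard⟩ := hn
  exact hcard ▸ s.card_le_univ

lemma Hgt_lt_of_lt {x y : P} (h : x < y) : Hgt P x < Hgt P y := by
  obtain ⟨s, hchain, hle, hcard⟩ := Hgt_mem P x
  have hy : y ∉ s := fun hy => h.not_ge (hle y hy)
  have : Hgt P x + 1 ∈ chainSetTo P y := by
    classical
    refine ⟨insert y s, ?_, ?_, ?_⟩
    · intro a ha b hb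
      rcases Finset.mem_insert.mp ha with rfl | ha' <;>
        rcases Finset.mem_insert.mp hb with rfl | hb'
      · exact Or.inl le_rfl
      · exact Or.inr ((hle b hb').trans h.le)
      · exact Or.inl ((hle a ha').trans h.le)
      · exact hchain a ha' b hb'
    · intro a ha
      rcases Finset.mem_insert.mp ha with ha | ha
      · exact ha.le
      · exact (hle a ha).trans h.le
    · rw [Finset.card_insert_of_notMem hy, hcard]
  have := le_csSup (chainSetTo_bdd P y) this
  exact lt_of_lt_of_le (Nat.lt_succ_self _) this

lemma Hgt_nu_eq (ν : P → P) (hmono : Monotone ν) (hinv : ∀ p, ν (ν p) = p) (x : P) :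
    Hgt P (ν x) = Hgt P x := by
  have key : ∀ z : P, Hgt P z ≤ Hgt P (ν z) := by
    intro z
    classical
    obtain ⟨s, hchain, hle, hcard⟩ := Hgt_mem P z
    have hinj : Function.Injective ν := fun a b hab => by
      have := congrArg ν hab; rwa [hinv, hinv] at this
    refine le_csSup (chainSetTo_bdd P (ν z)) ⟨s.image ν, ?_, ?_, ?_⟩
    · intro a ha b hb
      obtain ⟨a', ha', rfl⟩ := Finset.mem_image.mp ha
      obtain ⟨b', hb', rfl⟩ := Finset.mem_image.mp hb
      rcases hchain a' ha' b' hb' with h | h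
      · exact Or.inl (hmono h)
      · exact Or.inr (hmono h)
    · intro a ha
      obtain ⟨a', ha', rfl⟩ := Finset.mem_image.mp ha
      exact hmono (hle a' ha')
    · rw [Finset.card_image_of_injective _ hinj, hcard]
  have h1 := key x
  have h2 := key (ν x)
  rw [hinv] at h2
  omega

end lemmas

/-- For a finite free `ℤ₂`-poset `P` (with order-preserving fixed-point-free
involution `ν`), the cross-index satisfies `Xind(P) ≤ height(P) - 1`. -/
theorem crossIndex_le_height_sub_one (P : Type) [PartialOrder P] [Fintype P]
    (ν : P → P) (hmono : Monotone ν) (hinv : ∀ p, ν (ν p) = p)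
    (hfree : ∀ p, ν p ≠ p) :
    crossIndex P ν ≤ posetHeight P - 1 := by
  classical
  rcases isEmpty_or_nonempty P with hP | hP
  · refine le_trans (Nat.sInf_le ?_) (Nat.zero_le _)
    exact ⟨fun p => isEmptyElim p, fun p => isEmptyElim p,
      fun p q h => isEmptyElim p, fun p => isEmptyElim p⟩
  · -- rank for sign selection
    let e := Fintype.equivFin P
    let sgn : P → ℤ := fun x => if (e x : ℕ) < (e (ν x) : ℕ) then 1 else -1
    have hsgn_abs : ∀ x, |sgn x| = 1 := by
      intro x; simp only [sgn]; split <;> simp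
    have hsgn_nu : ∀ x, sgn (ν x) = -sgn x := by
      intro x
      have hne : (e x : ℕ) ≠ (e (ν x) : ℕ) := by
        intro h
        exact hfree x (e.injective (Fin.ext h.symm))
      simp only [sgn, hinv]
      rcases lt_or_gt_of_ne hne with h | h
      · rw [if_pos h, if_neg (not_lt.mpr h.le)]
      · rw [if_neg (not_lt.mpr h.le), if_pos h]; norm_num
    let f : P → ℤ := fun x => sgn x * (Hgt P x : ℤ)
    have habs : ∀ x, |f x| = (Hgt P x : ℤ) := by
      intro x
      simp only [f, abs_mul, hsgn_abs, one_mul, Nat.abs_cast]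
    have hh1 : 1 ≤ posetHeight P := by
      obtain ⟨x⟩ := hP
      exact le_trans (Hgt_pos P x) (Hgt_le_posetHeight P x)
    refine Nat.sInf_le ⟨f, ?_, ?_, ?_⟩
    · intro p
      rw [habs]
      have h1 := Hgt_pos P p
      have h2 := Hgt_le_posetHeight P p
      constructor
      · exact_mod_cast h1
      · have : ((posetHeight P - 1 : ℕ) : ℤ) + 1 = (posetHeight P : ℤ) := by
          omega
        rw [this]; exact_mod_cast h2
    · intro p q hpq
      rcases eq_or_lt_of_le hpq with rfl | hlt
      · exact Or.inl rfl
      · refine Or.inr ?_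
        rw [habs, habs]
        exact_mod_cast Hgt_lt_of_lt P hlt
    · intro p
      simp only [f, hsgn_nu, Hgt_nu_eq P ν hmono hinv, neg_mul]
end

section
/- Let \(G\) be a finite simple graph with clique number \(\omega(G) = n\). Then \(\operatorname{coind}(\mathsf{B}(G)) \geq n - 2\): there is a continuous \(\mathbb{Z}_2\)-map from the sphere \(S^{n-2}\) (with antipodal action) to the geometric realization of the box complex \(\mathsf{B}(G)\). -/
/-- The simplices of the box complex `B(G)`: a set of signed vertices `A' ⊎ A''`
(with `(true, v)` standing for `+v` and `(false, v)` for `-v`) is a simplex iff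
`A'` and `A''` are disjoint, the bipartite graph between them in `G` is complete,
and both common-neighbor sets `CN(A')` and `CN(A'')` are nonempty. -/
def BSimplex {V : Type} (G : SimpleGraph V) (σ : Finset (Bool × V)) : Prop :=
  (∀ v : V, ¬((true, v) ∈ σ ∧ (false, v) ∈ σ)) ∧
  (∀ u v : V, (true, u) ∈ σ → (false, v) ∈ σ → G.Adj u v) ∧
  (∃ w : V, ∀ v : V, (true, v) ∈ σ → G.Adj v w) ∧
  (∃ w : V, ∀ v : V, (false, v) ∈ σ → G.Adj v w)

/-- The geometric realization of the box complex `B(G)`: convex combinations of the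
signed vertices whose support is a simplex of `B(G)`. -/
def BRealization {V : Type} [Fintype V] [DecidableEq V] (G : SimpleGraph V) : Type :=
  {x : Bool × V → ℝ // (∀ p, 0 ≤ x p) ∧ (∑ p, x p) = 1 ∧
    BSimplex G (Finset.univ.filter (fun p => x p ≠ 0))}

noncomputable instance {V : Type} [Fintype V] [DecidableEq V] (G : SimpleGraph V) :
    TopologicalSpace (BRealization G) :=
  inferInstanceAs (TopologicalSpace {x : Bool × V → ℝ // _})

/-!
A clique of size `m + 1` consists of `m` pairwise adjacent vertices `w i` together with a common
neighbour `z` of all of them. Send `x ∈ S^{m-1}` to the point of `B(G)` with weight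
`(x i)⁺ / ‖x‖₁` at `+w i` and `(x i)⁻ / ‖x‖₁` at `-w i` (the radial projection onto the boundary
of the cross-polytope). This is continuous and turns `x ↦ -x` into the sign swap, and its support
`{+w i | x i > 0} ∪ {-w i | x i < 0}` is a simplex of `B(G)`: a positive and a negative vertex come
from distinct, hence adjacent, `w i`, and `z` is a common neighbour of each side. For `ω(G) = 0` the
sphere `S^{-1}` is empty.
-/

open Function Finset Metric

section CrossPolytope

variable {V : Type} [Fintype V]

lemma sum_abs_pos {y : V → ℝ} (hy : y ≠ 0) : 0 < ∑ v, |y v| := by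
  obtain ⟨v, hv⟩ := Function.ne_iff.1 hy
  exact sum_pos' (fun _ _ => abs_nonneg _) ⟨v, mem_univ v, abs_pos.2 hv⟩

noncomputable def crossPolytopePoint (y : V → ℝ) (p : Bool × V) : ℝ :=
  (if p.1 then (y p.2)⁺ else (y p.2)⁻) / ∑ v, |y v|

lemma crossPolytopePoint_nonneg (y : V → ℝ) (p : Bool × V) : 0 ≤ crossPolytopePoint y p :=
  div_nonneg (by split_ifs <;> simp) (sum_nonneg fun _ _ => abs_nonneg _)

lemma sum_crossPolytopePoint {y : V → ℝ} (hy : y ≠ 0) : ∑ p, crossPolytopePoint y p = 1 := by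
  simp only [crossPolytopePoint]
  rw [← sum_div, Fintype.sum_prod_type, Fintype.sum_bool]
  simp only [if_true, Bool.false_eq_true, if_false, ← sum_add_distrib, posPart_add_negPart]
  exact div_self (sum_abs_pos hy).ne'

lemma crossPolytopePoint_true_ne_zero_iff {y : V → ℝ} (hy : y ≠ 0) {v : V} :
    crossPolytopePoint y (true, v) ≠ 0 ↔ 0 < y v := by
  simp [crossPolytopePoint, (sum_abs_pos hy).ne']

lemma crossPolytopePoint_false_ne_zero_iff {y : V → ℝ} (hy : y ≠ 0) {v : V} :
    crossPolytopePoint y (false, v) ≠ 0 ↔ y v < 0 := by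
  simp [crossPolytopePoint, (sum_abs_pos hy).ne']

lemma crossPolytopePoint_neg (y : V → ℝ) (p : Bool × V) :
    crossPolytopePoint (-y) p = crossPolytopePoint y (!p.1, p.2) := by
  obtain ⟨_ | _, v⟩ := p <;> simp [crossPolytopePoint]

lemma Continuous.crossPolytopePoint {X : Type*} [TopologicalSpace X] {f : X → V → ℝ}
    (hf : Continuous f) (hf0 : ∀ x, f x ≠ 0) : Continuous fun x => crossPolytopePoint (f x) := by
  refine continuous_pi fun ⟨b, v⟩ => .div ?_ ?_ fun x => (sum_abs_pos (hf0 x)).ne'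
  · cases b
    · exact continuous_negPart.comp ((continuous_apply v).comp hf)
    · exact continuous_posPart.comp ((continuous_apply v).comp hf)
  · exact continuous_finsetSum _ fun u _ => ((continuous_apply u).comp hf).abs

lemma bSimplex_support_crossPolytopePoint {G : SimpleGraph V} {y : V → ℝ} (hy : y ≠ 0)
    (hclique : G.IsClique {v | y v ≠ 0}) (z : V) (hz : ∀ v, y v ≠ 0 → G.Adj v z) :
    BSimplex G {p | crossPolytopePoint y p ≠ 0} := by
  simp only [BSimplex, mem_filter, mem_univ, true_and, crossPolytopePoint_true_ne_zero_iff hy,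
    crossPolytopePoint_false_ne_zero_iff hy]
  refine ⟨fun v h => lt_asymm h.1 h.2, fun u v hu hv => ?_, ⟨z, fun v hv => hz v hv.ne'⟩,
    ⟨z, fun v hv => hz v hv.ne⟩⟩
  exact hclique hu.ne' hv.ne fun huv => (hu.trans (huv ▸ hv)).false

end CrossPolytope

section BoxComplex

variable {V : Type} [Fintype V] [DecidableEq V] {G : SimpleGraph V}

theorem exists_equivariant_map_sphere_of_isClique {ι : Type*} [Fintype ι] {w : ι → V}
    (hw : Injective w) (hclique : G.IsClique (Set.range w)) {z : V} (hz : ∀ i, G.Adj (w i) z) :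
    ∃ f : sphere (0 : EuclideanSpace ℝ ι) 1 → BRealization G, Continuous f ∧
      ∀ x y : sphere (0 : EuclideanSpace ℝ ι) 1, (y : EuclideanSpace ℝ ι) = -x →
        (f y).val = fun p : Bool × V => (f x).val (!p.1, p.2) := by
  let e : EuclideanSpace ℝ ι →ₗ[ℝ] V → ℝ :=
    ExtendByZero.linearMap ℝ w ∘ₗ (EuclideanSpace.equiv ι ℝ).toLinearMap
  have he0 (x : sphere (0 : EuclideanSpace ℝ ι) 1) : e x ≠ 0 :=
    (map_ne_zero_iff e ((extend_injective hw 0).comp (EuclideanSpace.equiv ι ℝ).injective)).2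
      (ne_zero_of_mem_unit_sphere x)
  have hrange (x : EuclideanSpace ℝ ι) (v : V) (hv : e x v ≠ 0) : v ∈ Set.range w := by
    by_contra hvw
    exact hv (extend_apply' _ _ _ hvw)
  refine ⟨fun x => ⟨crossPolytopePoint (e x), crossPolytopePoint_nonneg _,
    sum_crossPolytopePoint (he0 x), bSimplex_support_crossPolytopePoint (he0 x)
      (hclique.subset (hrange x)) z fun v hv => ?_⟩, ?_, fun x y hxy => ?_⟩
  · obtain ⟨i, rfl⟩ := hrange x v hv
    exact hz i
  · exact ((e.continuous_of_finiteDimensional.comp continuous_subtype_val).crossPolytopePoint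
      he0).subtype_mk _
  · funext p
    simp only [hxy, map_neg, crossPolytopePoint_neg]

theorem exists_equivariant_map_sphere_of_isNClique {m : ℕ} {s : Finset V}
    (hs : G.IsNClique (m + 1) s) :
    ∃ f : sphere (0 : EuclideanSpace ℝ (Fin m)) 1 → BRealization G, Continuous f ∧
      ∀ x y : sphere (0 : EuclideanSpace ℝ (Fin m)) 1, (y : EuclideanSpace ℝ (Fin m)) = -x →
        (f y).val = fun p : Bool × V => (f x).val (!p.1, p.2) := by
  let e := (s.equivFinOfCardEq hs.card_eq).symm
  have he_inj : Injective fun i => (e i : V) := Subtype.val_injective.comp e.injective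
  refine exists_equivariant_map_sphere_of_isClique (w := fun i => e i.castSucc) (z := e (Fin.last m))
    (he_inj.comp (Fin.castSucc_injective m))
    (hs.isClique.subset (Set.range_subset_iff.2 fun i => (e _).2)) fun i => ?_
  exact hs.isClique (e _).2 (e _).2 (he_inj.ne (Fin.castSucc_lt_last i).ne)

end BoxComplex

/-- If the clique number of `G` is `n`, then `coind(B(G)) ≥ n - 2`: there is a
continuous `ℤ₂`-map from the sphere `S^{n-2}` (the unit sphere of `ℝ^{n-1}`, with
the antipodal action) to the realization of the box complex `B(G)` (with the
sign-swap action). -/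
theorem coindex_B_ge_cliqueNum_sub_two {V : Type} [Fintype V] [DecidableEq V]
    (G : SimpleGraph V) (n : ℕ) (hω : G.cliqueNum = n) :
    ∃ f : Metric.sphere (0 : EuclideanSpace ℝ (Fin (n - 1))) 1 → BRealization G,
      Continuous f ∧
      ∀ x y : Metric.sphere (0 : EuclideanSpace ℝ (Fin (n - 1))) 1,
        (y : EuclideanSpace ℝ (Fin (n - 1))) = -(x : EuclideanSpace ℝ (Fin (n - 1))) →
        (f y).val = fun p : Bool × V => (f x).val (!p.1, p.2) := by
  cases n with
  | zero =>
    have : IsEmpty (Fin (0 - 1)) := Fin.isEmpty'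
    exact ⟨isEmptyElim, continuous_of_discreteTopology, isEmptyElim⟩
  | succ m =>
    obtain ⟨s, hs⟩ := G.exists_isNClique_cliqueNum
    exact exists_equivariant_map_sphere_of_isNClique (hω ▸ hs)
end

section
/- There exists a simplicial \(\mathbb{Z}_2\)-map \(\lambda : \operatorname{sd}(\mathsf{B}(K_{d+1})) \to \partial \Diamond^d\) from the first barycentric subdivision of the box complex of the complete graph \(K_{d+1}\) to the boundary of the \(d\)-dimensional cross-polytope, defined as follows: identify \(V(K_{d+1})\) with \(\{1, \dots, d+1\}\) and signed vertices with \(\{\pm 1, \dots, \pm(d+1)\}\); for a vertex \(v\) set \(\mu(v) = (-1)^v v\); for a simplex \(\sigma\) of \(\mathsf{B}(K_{d+1})\) with vertices \(v_0, \dots, v_{\dim \sigma}\) ordered by increasing absolute value, let \(k\) be one plus the number of sign changes in \(\mu(v_0), \dots, \mu(v_{\dim\sigma})\) and \(s\) the sign of \(\mu(v_0)\); then \(\lambda(\sigma) = s\, e_k\) is well-defined (\(k \in \{1, \dots, d\}\)), simplicial, and commutes with the \(\mathbb{Z}_2\)-actions. -/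
/-- The simplices of `B(K_{d+1})`: sets of signed vertices (signed elements of
`{1, …, d+1}`, a vertex `(b, i)` standing for `±(i+1)`) containing no antipodal
pair, whose positive part is not everything and whose negative part is not
everything. -/
def BKSimplex (d : ℕ) (σ : Finset (Bool × Fin (d + 1))) : Prop :=
  (∀ i : Fin (d + 1), ¬((true, i) ∈ σ ∧ (false, i) ∈ σ)) ∧
  (∃ i : Fin (d + 1), (true, i) ∉ σ) ∧
  (∃ i : Fin (d + 1), (false, i) ∉ σ)

/-- The sign of `μ(v) = (-1)^v · v` for the signed vertex `p = (b, i)`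
representing `±(i+1)`: `true` iff `μ(v) > 0`. -/
def muSign (d : ℕ) (p : Bool × Fin (d + 1)) : Bool :=
  p.1 == decide ((p.2.val + 1) % 2 = 0)

/-- The number of sign changes in a list of signs. -/
def signChanges : List Bool → ℕ
  | [] => 0
  | [_] => 0
  | a :: b :: t => (if a = b then 0 else 1) + signChanges (b :: t)

/-- The list of signs `μ(v₀), μ(v₁), …` of the vertices of a simplex `σ`,
ordered by increasing absolute value. -/
def signList (d : ℕ) (σ : Finset (Bool × Fin (d + 1))) : List Bool :=
  ((σ.image Prod.snd).sort (· ≤ ·)).map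
    (fun i => muSign d (decide ((true, i) ∈ σ), i))

/-- The map `λ`: a simplex `σ` is sent to `s · e_k`, encoded as the pair `(s, k)`
where `s` is the sign of `μ(v₀)` and `k` is one plus the number of sign changes
in `μ(v₀), …, μ(v_{dim σ})`. -/
def lambdaMap (d : ℕ) (σ : Finset (Bool × Fin (d + 1))) : Bool × ℕ :=
  ((signList d σ).headD true, signChanges (signList d σ) + 1)

/-!
Write `ℓ(σ)` for the sequence of signs `μ(v)` of the vertices of `σ` in order of increasing
absolute value, so that `λ(σ) = (head ℓ(σ), 1 + #sign changes of ℓ(σ))`. The sign swap negates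
every `μ(v)`, which preserves sign changes and negates the head. If `σ ⊆ σ'` then `ℓ(σ)` is a
sublist of `ℓ(σ')`, since the sign of an absolute value present in both is the same; deleting
entries never creates sign changes, and if the heads differ then `ℓ(σ')` has a sign change before
the head of `ℓ(σ)`, so `λ(σ)` and `λ(σ')` cannot be antipodal. Finally `ℓ(σ)` has at most `d + 1`
entries, and `d` sign changes would force all `d + 1` absolute values to occur with alternating
`μ`; since `μ(v) = (-1)^v v`, that means all vertices of `σ` carry the same sign, which a simplex
of `B(K_{d+1})` cannot do.
-/

section SignChanges

open List

theorem signChanges_cons_cons (a b : Bool) (l : List Bool) :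
    signChanges (a :: b :: l) = (if a = b then 0 else 1) + signChanges (b :: l) := rfl

theorem signChanges_map_not (l : List Bool) : signChanges (l.map not) = signChanges l := by
  induction l using twoStepInduction with
  | nil | singleton => rfl
  | cons_cons a b l _ ih =>
    have := ih b
    simp only [map_cons] at this ⊢
    simp [signChanges_cons_cons, this]

theorem signChanges_add_one_le_length {l : List Bool} (hl : l ≠ []) :
    signChanges l + 1 ≤ l.length := by
  induction l using twoStepInduction with
  | nil => exact absurd rfl hl
  | singleton => simp [signChanges]
  | cons_cons a b l _ ih =>
    have := ih b (cons_ne_nil b l)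
    simp only [signChanges_cons_cons, length_cons] at this ⊢
    split <;> omega

theorem isChain_ne_of_signChanges_add_one_eq_length {l : List Bool}
    (h : signChanges l + 1 = l.length) : l.IsChain (· ≠ ·) := by
  induction l using twoStepInduction with
  | nil => exact isChain_nil
  | singleton => exact isChain_singleton _
  | cons_cons a b l _ ih =>
    have hle := signChanges_add_one_le_length (cons_ne_nil b l)
    simp only [signChanges_cons_cons, length_cons] at h hle
    rw [isChain_cons_cons]
    split at h
    · omega
    · exact ⟨‹_›, ih b (by rw [length_cons]; omega)⟩

theorem signChanges_cons_le_one_add (a b : Bool) (l : List Bool) :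
    signChanges (a :: l) ≤ 1 + signChanges (b :: l) := by
  cases l with
  | nil => simp [signChanges]
  | cons c l => simp only [signChanges_cons_cons]; split <;> split <;> omega

theorem signChanges_cons_le_of_sublist (a : Bool) {l l' : List Bool} (h : l <+ l') :
    signChanges (a :: l) ≤ signChanges (a :: l') := by
  induction h generalizing a with
  | slnil => rfl
  | cons b _ ih =>
    refine (ih a).trans ?_
    rw [signChanges_cons_cons]
    split
    · subst_vars; simp
    · exact signChanges_cons_le_one_add a b _
  | cons_cons b _ ih =>
    simp only [signChanges_cons_cons]
    exact Nat.add_le_add_left (ih b) _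

theorem signChanges_lt_of_cons_sublist_cons {a a' : Bool} {l l' : List Bool}
    (h : a :: l <+ a' :: l') (ha : a ≠ a') : signChanges (a :: l) < signChanges (a' :: l') := by
  calc signChanges (a :: l) < signChanges (a' :: a :: l) := by
        rw [signChanges_cons_cons, if_neg (Ne.symm ha)]; omega
    _ ≤ signChanges (a' :: l') := signChanges_cons_le_of_sublist a' (h.of_cons_of_ne ha)

end SignChanges

theorem Finset.sort_sublist_sort_of_subset {α : Type*} [LinearOrder α] {s t : Finset α}
    (h : s ⊆ t) : (s.sort (· ≤ ·)).Sublist (t.sort (· ≤ ·)) :=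
  List.sublist_of_subperm_of_pairwise
    ((Finset.sort_nodup _ _).subperm fun a ha => by simpa using h ((Finset.mem_sort _).1 ha))
    (Finset.pairwise_sort _ _) (Finset.pairwise_sort _ _)

section SignList

variable {d : ℕ} {σ σ' : Finset (Bool × Fin (d + 1))}

theorem muSign_not (b : Bool) (i : Fin (d + 1)) : muSign d (!b, i) = !muSign d (b, i) := by
  cases b <;> simp [muSign]

theorem muSign_ne_muSign_iff {b b' : Bool} {i j : Fin (d + 1)} (hij : j.val = i.val + 1) :
    muSign d (b, i) ≠ muSign d (b', j) ↔ b = b' := by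
  have : (j.val + 1) % 2 = 0 ↔ ¬(i.val + 1) % 2 = 0 := by omega
  cases b <;> cases b' <;> simp [muSign, this] <;> omega

def AntipodalFree (σ : Finset (Bool × Fin (d + 1))) : Prop :=
  ∀ i : Fin (d + 1), ¬((true, i) ∈ σ ∧ (false, i) ∈ σ)

theorem BKSimplex.antipodalFree (hσ : BKSimplex d σ) : AntipodalFree σ := hσ.1

theorem AntipodalFree.mono (hap' : AntipodalFree σ') (hsub : σ ⊆ σ') : AntipodalFree σ :=
  fun i h => hap' i ⟨hsub h.1, hsub h.2⟩

theorem AntipodalFree.decide_mem_eq (hap : AntipodalFree σ) {b : Bool} {i : Fin (d + 1)}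
    (h : (b, i) ∈ σ) (c : Bool) : decide ((c, i) ∈ σ) = (c == b) := by
  cases b <;> cases c <;> simp [h] <;> exact fun h' => hap i (by tauto)

theorem length_signList : (signList d σ).length = (σ.image Prod.snd).card := by
  simp [signList]

theorem signList_ne_nil (hne : σ.Nonempty) : signList d σ ≠ [] := by
  intro h
  have := (hne.image Prod.snd).card_pos
  rw [← length_signList, h] at this
  exact lt_irrefl 0 this

theorem signList_image_flip (hap : AntipodalFree σ) :
    signList d (σ.image fun p => (!p.1, p.2)) = (signList d σ).map not := by
  have hsnd : (σ.image fun p => (!p.1, p.2)).image Prod.snd = σ.image Prod.snd := by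
    rw [Finset.image_image]; rfl
  rw [signList, signList, hsnd, List.map_map]
  refine List.map_congr_left fun i hi => ?_
  obtain ⟨⟨b, j⟩, hb, rfl⟩ := Finset.mem_image.1 ((Finset.mem_sort _).1 hi)
  simp [hap.decide_mem_eq hb, muSign_not]

theorem signList_sublist (hap' : AntipodalFree σ') (hsub : σ ⊆ σ') :
    (signList d σ).Sublist (signList d σ') := by
  have hap : AntipodalFree σ := hap'.mono hsub
  have hsigns : signList d σ = ((σ.image Prod.snd).sort (· ≤ ·)).map
      fun i => muSign d (decide ((true, i) ∈ σ'), i) := by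
    refine List.map_congr_left fun i hi => ?_
    obtain ⟨⟨b, j⟩, hb, rfl⟩ := Finset.mem_image.1 ((Finset.mem_sort _).1 hi)
    simp [hap.decide_mem_eq hb, hap'.decide_mem_eq (hsub hb)]
  rw [hsigns, signList]
  exact (Finset.sort_sublist_sort_of_subset (Finset.image_subset_image hsub)).map _

theorem not_isChain_ne_signList (hσ : BKSimplex d σ) (huniv : σ.image Prod.snd = Finset.univ) :
    ¬(signList d σ).IsChain (· ≠ ·) := by
  intro hchain
  set b := fun i : Fin (d + 1) => decide ((true, i) ∈ σ)
  have hconst : ((List.finRange (d + 1)).map b).Pairwise (· = ·) := by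
    refine List.IsChain.pairwise ?_
    rw [signList, huniv, Fin.sort_univ, List.isChain_map, List.isChain_iff_getElem] at hchain
    rw [List.isChain_map, List.isChain_iff_getElem]
    intro n hn
    exact (muSign_ne_muSign_iff (by simp)).1 (hchain n hn)
  obtain ⟨i, hi⟩ := hσ.2.1
  obtain ⟨j, hj⟩ := hσ.2.2
  have hj' : (true, j) ∈ σ := by
    have : j ∈ σ.image Prod.snd := by rw [huniv]; exact Finset.mem_univ j
    obtain ⟨⟨c, _⟩, hc, rfl⟩ := Finset.mem_image.1 this
    cases c
    exacts [absurd hc hj, hc]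
  have hbij : b i = b j := hconst.forall_of_forall (fun _ _ => rfl)
    (List.mem_map_of_mem (List.mem_finRange i)) (List.mem_map_of_mem (List.mem_finRange j))
  simp [b, hi, hj'] at hbij

end SignList

section LambdaMap

variable {d : ℕ} {σ σ' : Finset (Bool × Fin (d + 1))}

theorem lambdaMap_snd_le (hσ : BKSimplex d σ) (hne : σ.Nonempty) : (lambdaMap d σ).2 ≤ d := by
  have hlen : (signList d σ).length ≤ d + 1 := by
    simpa [length_signList] using Finset.card_le_univ (σ.image Prod.snd)
  have hle := signChanges_add_one_le_length (signList_ne_nil hne)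
  by_contra! h
  change d < signChanges (signList d σ) + 1 at h
  have heq : signChanges (signList d σ) + 1 = (signList d σ).length := by omega
  refine not_isChain_ne_signList hσ (Finset.eq_univ_of_card _ ?_)
    (isChain_ne_of_signChanges_add_one_eq_length heq)
  rw [← length_signList, Fintype.card_fin]; omega

theorem lambdaMap_image_flip (hap : AntipodalFree σ)
    (hne : σ.Nonempty) :
    lambdaMap d (σ.image fun p => (!p.1, p.2)) = (!(lambdaMap d σ).1, (lambdaMap d σ).2) := by
  obtain ⟨a, l, hl⟩ := List.exists_cons_of_ne_nil (signList_ne_nil hne)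
  simp only [lambdaMap, signList_image_flip hap, signChanges_map_not]
  rw [hl]
  rfl

theorem lambdaMap_snd_lt_of_subset (hap' : AntipodalFree σ') (hne : σ.Nonempty) (hsub : σ ⊆ σ')
    (hs : (lambdaMap d σ).1 ≠ (lambdaMap d σ').1) :
    (lambdaMap d σ).2 < (lambdaMap d σ').2 := by
  obtain ⟨a, l, hl⟩ := List.exists_cons_of_ne_nil (signList_ne_nil hne)
  obtain ⟨a', l', hl'⟩ := List.exists_cons_of_ne_nil (signList_ne_nil (hne.mono hsub))
  have hsl := signList_sublist hap' hsub
  rw [hl, hl'] at hsl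
  simp only [lambdaMap, hl, hl', List.headD_cons] at hs ⊢
  exact Nat.succ_lt_succ (signChanges_lt_of_cons_sublist_cons hsl hs)

end LambdaMap

/-- The map `λ` defines a simplicial `ℤ₂`-map `sd(B(K_{d+1})) → ∂◊^d`:
for every nonempty simplex `σ` of `B(K_{d+1})`, the index `k` of `λ(σ) = s·e_k`
lies in `{1, …, d}` (so `λ(σ)` is a vertex of `∂◊^d`); `λ` commutes with the
sign-swap involutions; and along any inclusion of simplices `σ ⊆ σ'` the images
are never antipodal vertices of `∂◊^d` (so chains of simplices, i.e. simplices of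
the barycentric subdivision, are mapped to simplices of `∂◊^d`). -/
theorem lambda_is_simplicial_Z2_map (d : ℕ) (σ : Finset (Bool × Fin (d + 1)))
    (hσ : BKSimplex d σ) (hne : σ.Nonempty) :
    (1 ≤ (lambdaMap d σ).2 ∧ (lambdaMap d σ).2 ≤ d) ∧
    (lambdaMap d (σ.image (fun p => (!p.1, p.2))) =
      (!(lambdaMap d σ).1, (lambdaMap d σ).2)) ∧
    (∀ σ' : Finset (Bool × Fin (d + 1)), BKSimplex d σ' → σ ⊆ σ' →
      ¬((lambdaMap d σ).2 = (lambdaMap d σ').2 ∧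
        (lambdaMap d σ).1 ≠ (lambdaMap d σ').1)) := by
  refine ⟨⟨Nat.le_add_left 1 _, lambdaMap_snd_le hσ hne⟩, lambdaMap_image_flip hσ.antipodalFree hne, ?_⟩
  rintro σ' hσ' hsub ⟨hk, hs⟩
  exact (lambdaMap_snd_lt_of_subset hσ'.antipodalFree hne hsub hs).ne hk
end

section
/- Let \(G'\) be the disjoint union of a graph \(G\) with all complete bipartite graphs \(K_{\ell, m}\) where \(\ell + m = 2k\) and \(1 \leq \ell \leq k - 1\). Then \(G\) contains a complete bipartite subgraph with both parts of size at least \(k\) if and only if \(b(G') \geq 2k\), where \(b(H)\) is the largest \(n\) such that \(H\) contains a complete bipartite subgraph with parts of sizes \(\ell, m\) for every \(\ell, m \geq 1\) with \(\ell + m = n\). -/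
/-- `H` contains a (not necessarily induced) complete bipartite subgraph with
parts of sizes `l` and `m`. -/
def HasBiclique {α : Type} (H : SimpleGraph α) (l m : ℕ) : Prop :=
  ∃ A B : Finset α, Disjoint A B ∧ A.card = l ∧ B.card = m ∧
    ∀ a ∈ A, ∀ b ∈ B, H.Adj a b

/-- The parameter `b(H)`: the largest `n` such that `H` contains a complete
bipartite subgraph `K_{l,m}` for every `l, m ≥ 1` with `l + m = n`. -/
noncomputable def bParam {α : Type} [Fintype α] (H : SimpleGraph α) : ℕ :=
  sSup {n : ℕ | ∀ l m : ℕ, 1 ≤ l → 1 ≤ m → l + m = n → HasBiclique H l m}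

/-- The disjoint union `G'` of `G` with all complete bipartite graphs `K_{l,m}`
where `l + m = 2k` and `1 ≤ l ≤ k - 1`: the index `j : Fin (k-1)` encodes
`l = j + 1`, and the `j`-th copy of `K_{l, 2k-l}` lives on `Fin (2k)` with parts
`{a : a ≤ j}` and its complement. -/
def auxGraph {V : Type} (G : SimpleGraph V) (k : ℕ) :
    SimpleGraph (V ⊕ (Fin (k - 1) × Fin (2 * k))) :=
  SimpleGraph.fromRel (fun x y =>
    match x, y with
    | Sum.inl u, Sum.inl v => G.Adj u v
    | Sum.inr (j, a), Sum.inr (j', b) =>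
        j = j' ∧ ((a.val ≤ j.val) ↔ ¬(b.val ≤ j.val))
    | _, _ => False)

/-! A biclique `K_{l,m}` with `l, m ≥ 1` is connected, so in `G'` it lies either in `G` or in one
of the added copies of `K_{j+1, 2k-j-1}`. The added copies supply every `K_{l,m}` with `l + m = 2k`
except the balanced `K_{k,k}`, and they cannot supply that one because one of their parts has fewer
than `k` vertices. -/

lemma HasBiclique.symm {α : Type} {H : SimpleGraph α} {l m : ℕ}
    (h : HasBiclique H l m) : HasBiclique H m l := by
  obtain ⟨A, B, hd, hA, hB, hadj⟩ := h
  exact ⟨B, A, hd.symm, hB, hA, fun b hb a ha => (hadj a ha b hb).symm⟩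

lemma HasBiclique.mono {α : Type} {H : SimpleGraph α} {l m l' m' : ℕ}
    (h : HasBiclique H l m) (hl : l' ≤ l) (hm : m' ≤ m) : HasBiclique H l' m' := by
  obtain ⟨A, B, hd, rfl, rfl, hadj⟩ := h
  obtain ⟨A', hA'A, rfl⟩ := Finset.exists_subset_card_eq hl
  obtain ⟨B', hB'B, rfl⟩ := Finset.exists_subset_card_eq hm
  exact ⟨A', B', hd.mono hA'A hB'B, rfl, rfl, fun a ha b hb => hadj a (hA'A ha) b (hB'B hb)⟩

lemma HasBiclique.map {α β : Type} {G : SimpleGraph α} {H : SimpleGraph β} {l m : ℕ}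
    (f : G ↪g H) (h : HasBiclique G l m) : HasBiclique H l m := by
  obtain ⟨A, B, hd, rfl, rfl, hadj⟩ := h
  refine ⟨A.map f.toEmbedding, B.map f.toEmbedding, Finset.disjoint_map _ |>.mpr hd,
    Finset.card_map _, Finset.card_map _, ?_⟩
  simp only [Finset.mem_map, forall_exists_index, and_imp, forall_apply_eq_imp_iff₂]
  exact fun a ha b hb => f.map_adj_iff.mpr (hadj a ha b hb)

lemma hasBiclique_of_subset_map {α β : Type} [Fintype α] {G : SimpleGraph α}
    {H : SimpleGraph β} (f : G ↪g H) {A B : Finset β} (hd : Disjoint A B)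
    (hA : A ⊆ Finset.univ.map f.toEmbedding) (hB : B ⊆ Finset.univ.map f.toEmbedding)
    (hadj : ∀ a ∈ A, ∀ b ∈ B, H.Adj a b) : HasBiclique G A.card B.card := by
  obtain ⟨A', -, rfl⟩ := Finset.subset_map_iff.mp hA
  obtain ⟨B', -, rfl⟩ := Finset.subset_map_iff.mp hB
  refine ⟨A', B', Finset.disjoint_map _ |>.mp hd, (Finset.card_map _).symm,
    (Finset.card_map _).symm, fun a ha b hb => ?_⟩
  exact f.map_adj_iff.mp (hadj _ (Finset.mem_map_of_mem _ ha) _ (Finset.mem_map_of_mem _ hb))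

lemma le_bParam_iff {α : Type} [Fintype α] (H : SimpleGraph α) (n : ℕ) :
    n ≤ bParam H ↔ ∀ l m : ℕ, 1 ≤ l → 1 ≤ m → l + m = n → HasBiclique H l m := by
  set S := {n : ℕ | ∀ l m : ℕ, 1 ≤ l → 1 ≤ m → l + m = n → HasBiclique H l m}
  have hS : BddAbove S := by
    refine ⟨Fintype.card α + 1, fun n hn => ?_⟩
    by_contra! hlt
    classical
    obtain ⟨A, B, hd, hA, hB, -⟩ := hn 1 (n - 1) le_rfl (by omega) (by omega)
    have := Finset.card_le_univ (A ∪ B)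
    rw [Finset.card_union_of_disjoint hd] at this
    omega
  have hS0 : 0 ∈ S := fun l m hl hm h => by omega
  change n ≤ sSup S ↔ n ∈ S
  refine ⟨fun hn l m hl hm hlm => ?_, fun hn => le_csSup hS hn⟩
  -- `S` is downward closed: enlarge the second part to reach `sSup S ∈ S`.
  exact (Nat.sSup_mem ⟨0, hS0⟩ hS l (m + (sSup S - n)) hl (by omega)
    (by omega)).mono le_rfl (by omega)

section auxGraph

variable {V : Type} (G : SimpleGraph V) {k : ℕ}

lemma auxGraph_adj_inl_inl {u v : V} :
    (auxGraph G k).Adj (Sum.inl u) (Sum.inl v) ↔ G.Adj u v := by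
  simp only [auxGraph, SimpleGraph.fromRel_adj, ne_eq, Sum.inl.injEq]
  exact ⟨fun ⟨_, h⟩ => h.elim id G.adj_symm, fun h => ⟨h.ne, .inl h⟩⟩

lemma auxGraph_adj_inr_inr {j j' : Fin (k - 1)} {a b : Fin (2 * k)} :
    (auxGraph G k).Adj (Sum.inr (j, a)) (Sum.inr (j', b)) ↔
      j = j' ∧ (a.val ≤ j.val ↔ ¬ b.val ≤ j.val) := by
  simp only [auxGraph, SimpleGraph.fromRel_adj, ne_eq, Sum.inr.injEq, Prod.mk.injEq]
  constructor
  · rintro ⟨-, ⟨rfl, h⟩ | ⟨rfl, h⟩⟩ <;> tauto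
  · rintro ⟨rfl, h⟩
    exact ⟨fun ⟨_, hab⟩ => by subst hab; tauto, .inl ⟨rfl, h⟩⟩

lemma exists_eq_inl_of_auxGraph_adj {u : V} {y : V ⊕ (Fin (k - 1) × Fin (2 * k))}
    (h : (auxGraph G k).Adj (Sum.inl u) y) : ∃ v, y = Sum.inl v := by
  rcases y with v | _
  · exact ⟨v, rfl⟩
  · simp [auxGraph, SimpleGraph.fromRel_adj] at h

lemma exists_eq_inr_of_auxGraph_adj {j : Fin (k - 1)} {a : Fin (2 * k)}
    {y : V ⊕ (Fin (k - 1) × Fin (2 * k))} (h : (auxGraph G k).Adj (Sum.inr (j, a)) y) :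
    ∃ b : Fin (2 * k), y = Sum.inr (j, b) ∧ (a.val ≤ j.val ↔ ¬ b.val ≤ j.val) := by
  rcases y with _ | ⟨j', b⟩
  · simp [auxGraph, SimpleGraph.fromRel_adj] at h
  · obtain ⟨rfl, hab⟩ := (auxGraph_adj_inr_inr G).mp h
    exact ⟨b, rfl, hab⟩

def auxGraphInl : G ↪g auxGraph G k where
  toFun := Sum.inl
  inj' := Sum.inl_injective
  map_rel_iff' := auxGraph_adj_inl_inl G

variable (V) in
def auxGraphInr (j : Fin (k - 1)) : Fin (2 * k) ↪ V ⊕ (Fin (k - 1) × Fin (2 * k)) :=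
  (Function.Embedding.sectR j _).trans .inr

lemma hasBiclique_auxGraph_of_lt {l : ℕ} (hl : 1 ≤ l) (hlk : l < k) :
    HasBiclique (auxGraph G k) l (2 * k - l) := by
  obtain ⟨j, hj⟩ : ∃ j : Fin (k - 1), j.val = l - 1 := ⟨⟨l - 1, by omega⟩, rfl⟩
  obtain ⟨c, hc⟩ : ∃ c : Fin (2 * k), c.val = l - 1 := ⟨⟨l - 1, by omega⟩, rfl⟩
  set e := auxGraphInr V j
  refine ⟨(Finset.Iic c).map e, (Finset.Ioi c).map e, ?_, ?_, ?_, ?_⟩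
  · rw [Finset.disjoint_map, Finset.disjoint_left]
    intro a ha ha'
    simp only [Finset.mem_Iic, Finset.mem_Ioi] at ha ha'
    exact (lt_irrefl a) (ha.trans_lt ha')
  · rw [Finset.card_map, Fin.card_Iic]
    omega
  · rw [Finset.card_map, Fin.card_Ioi]
    omega
  · simp only [Finset.mem_map, Finset.mem_Iic, Finset.mem_Ioi, forall_exists_index, and_imp,
      forall_apply_eq_imp_iff₂]
    intro a ha b hb
    refine (auxGraph_adj_inr_inr G).mpr ⟨rfl, ?_⟩
    rw [Fin.le_def] at ha
    rw [Fin.lt_def] at hb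
    omega

lemma hasBiclique_auxGraph_of_add_eq {l m : ℕ} (hG : HasBiclique G k k) (hl : 1 ≤ l)
    (hm : 1 ≤ m) (hlm : l + m = 2 * k) : HasBiclique (auxGraph G k) l m := by
  rcases lt_trichotomy l k with hlk | rfl | hkl
  · simpa [show m = 2 * k - l by omega] using hasBiclique_auxGraph_of_lt G hl hlk
  · simpa [show m = l by omega] using hG.map (auxGraphInl G)
  · simpa [show l = 2 * k - m by omega] using (hasBiclique_auxGraph_of_lt G hm (by omega)).symm

lemma card_le_of_forall_eq_inr_le {C : Finset (V ⊕ (Fin (k - 1) × Fin (2 * k)))}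
    {j : Fin (k - 1)}
    (hC : ∀ x ∈ C, ∃ a : Fin (2 * k), x = Sum.inr (j, a) ∧ a.val ≤ j.val) :
    C.card ≤ j.val + 1 := by
  have hsub : C ⊆ (Finset.Iic (⟨j.val, by omega⟩ : Fin (2 * k))).map (auxGraphInr V j) := by
    intro x hx
    obtain ⟨a, rfl, ha⟩ := hC x hx
    exact Finset.mem_map_of_mem _ (Finset.mem_Iic.mpr (Fin.le_def.mpr ha))
  simpa using Finset.card_le_card hsub

lemma hasBiclique_of_hasBiclique_auxGraph [Fintype V] {l m : ℕ} (hk : 1 ≤ k) (hl : k ≤ l)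
    (hm : k ≤ m) (h : HasBiclique (auxGraph G k) l m) : HasBiclique G l m := by
  obtain ⟨A, B, hd, rfl, rfl, hadj⟩ := h
  obtain ⟨a₀, ha₀⟩ := Finset.card_pos.mp (by omega : 0 < A.card)
  obtain ⟨b₀, hb₀⟩ := Finset.card_pos.mp (by omega : 0 < B.card)
  rcases b₀ with v₀ | ⟨j, t⟩
  · have hA : A ⊆ Finset.univ.map (auxGraphInl G).toEmbedding := fun a ha => by
      obtain ⟨u, rfl⟩ := exists_eq_inl_of_auxGraph_adj G (hadj a ha _ hb₀).symm
      exact Finset.mem_map_of_mem _ (Finset.mem_univ u)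
    obtain ⟨u₀, rfl⟩ := exists_eq_inl_of_auxGraph_adj G (hadj a₀ ha₀ _ hb₀).symm
    have hB : B ⊆ Finset.univ.map (auxGraphInl G).toEmbedding := fun b hb => by
      obtain ⟨v, rfl⟩ := exists_eq_inl_of_auxGraph_adj G (hadj _ ha₀ b hb)
      exact Finset.mem_map_of_mem _ (Finset.mem_univ v)
    exact hasBiclique_of_subset_map (auxGraphInl G) hd hA hB hadj
  · exfalso
    obtain ⟨s, rfl, hst⟩ := exists_eq_inr_of_auxGraph_adj G (hadj a₀ ha₀ _ hb₀).symm
    have hsmall : A.card ≤ j.val + 1 ∨ B.card ≤ j.val + 1 := by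
      by_cases ht : t.val ≤ j.val
      · refine .inr (card_le_of_forall_eq_inr_le fun b hb => ?_)
        obtain ⟨t', rfl, hst'⟩ := exists_eq_inr_of_auxGraph_adj G (hadj _ ha₀ b hb)
        exact ⟨t', rfl, by tauto⟩
      · refine .inl (card_le_of_forall_eq_inr_le fun a ha => ?_)
        obtain ⟨s', rfl, hts'⟩ := exists_eq_inr_of_auxGraph_adj G (hadj a ha _ hb₀).symm
        exact ⟨s', rfl, by tauto⟩
    have := j.isLt
    omega

end auxGraph

theorem balanced_biclique_iff_bParam_general {V : Type} [Fintype V]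
    (G : SimpleGraph V) (k : ℕ) (hk : 1 ≤ k) :
    (∃ A B : Finset V, Disjoint A B ∧ k ≤ A.card ∧ k ≤ B.card ∧
        ∀ a ∈ A, ∀ b ∈ B, G.Adj a b) ↔
      2 * k ≤ bParam (auxGraph G k) := by
  rw [le_bParam_iff]
  constructor
  · rintro ⟨A, B, hd, hA, hB, hadj⟩
    exact fun l m => hasBiclique_auxGraph_of_add_eq G
      ((show HasBiclique G A.card B.card from ⟨A, B, hd, rfl, rfl, hadj⟩).mono hA hB)
  · intro h
    obtain ⟨A, B, hd, hA, hB, hadj⟩ :=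
      hasBiclique_of_hasBiclique_auxGraph G hk le_rfl le_rfl (h k k hk hk (two_mul k).symm)
    exact ⟨A, B, hd, hA.ge, hB.ge, hadj⟩

/-- `G` contains a complete bipartite subgraph with both parts of size at least
`k` if and only if `b(G') ≥ 2k`, where `G'` is the disjoint union of `G` with all
complete bipartite graphs `K_{l,m}` for `l + m = 2k`, `1 ≤ l ≤ k - 1`. -/
theorem balanced_biclique_iff_bParam {V : Type} [Fintype V] [DecidableEq V]
    (G : SimpleGraph V) (k : ℕ) (hk : 1 ≤ k) :
    (∃ A B : Finset V, Disjoint A B ∧ k ≤ A.card ∧ k ≤ B.card ∧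
        ∀ a ∈ A, ∀ b ∈ B, G.Adj a b) ↔
      2 * k ≤ bParam (auxGraph G k) :=
  balanced_biclique_iff_bParam_general G k hk
end
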